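/- (Anisotropic Hölder bound for the free-transport operator.) Let α ∈ (1,2), β > 0 and T > 0. There exists a constant C = C(d, α, β, T) > 0 such that for every t ∈ [0,T] and every bounded f : ℝ^{2d} → ℝ with ‖f‖_{C^{(1+α)β}_a} < ∞: ‖Γ_t f‖_{C^β_a} ≤ C ( ‖f‖_{C^β_a} + t^β ‖f‖_{C^{(1+α)β}_a} ). -/

import Mathlib

open MeasureTheory Filter Set
open scoped ENNReal NNReal Topology

noncomputable section

abbrev Rd (d : ℕ) : Type := EuclideanSpace ℝ (Fin d)
abbrev R2d (d : ℕ) : Type := Rd d × Rd d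

/-- The free-transport shift operator `Γ_t (x,v) = (x + t v, v)`. -/
def Gam {d : ℕ} (t : ℝ) (z : R2d d) : R2d d := (z.1 + t • z.2, z.2)

/-- The anisotropic quasi-norm `|z|_a = |x|^{1/(1+α)} + |v|`. -/
def anorm {d : ℕ} (α : ℝ) (z : R2d d) : ℝ := ‖z.1‖ ^ (1 / (1 + α)) + ‖z.2‖

/-- Iterated difference operator `δ_h^{(M)}`. -/
def deltaIter {d : ℕ} {E : Type*} [AddCommGroup E] (h : R2d d) :
    ℕ → (R2d d → E) → R2d d → E
  | 0, f => f
  | M + 1, f => fun z => deltaIter h M f (z + h) - deltaIter h M f z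

/-- Anisotropic Hölder–Zygmund norm `‖f‖_{C^s_a}`. -/
def aHolderNorm {d : ℕ} {E : Type*} [NormedAddCommGroup E] (α s : ℝ) (f : R2d d → E) : ℝ≥0∞ :=
  (⨆ z, (‖f z‖₊ : ℝ≥0∞)) +
    ⨆ (h : R2d d) (_ : h ≠ 0) (z : R2d d),
      ENNReal.ofReal (anorm α h ^ (-s) * ‖deltaIter h (⌊s⌋₊ + 1) f z‖)

/-- Hölder–Zygmund norm in the `x`-variable `‖f‖_{C^s_x}`. -/
def xHolderNorm {d : ℕ} {E : Type*} [NormedAddCommGroup E] (s : ℝ) (f : R2d d → E) : ℝ≥0∞ :=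
  (⨆ z, (‖f z‖₊ : ℝ≥0∞)) +
    ⨆ (h : Rd d) (_ : h ≠ 0) (z : R2d d),
      ENNReal.ofReal (‖h‖ ^ (-s) * ‖deltaIter ((h, 0) : R2d d) (⌊s⌋₊ + 1) f z‖)

/-- Conditional `L_p` norm `‖X‖_{L_p(Ω)|G} = (E[|X|^p | G])^{1/p}`. -/
def condLp {Ω : Type*} {m0 : MeasurableSpace Ω} {E : Type*} [NormedAddCommGroup E]
    (m : MeasurableSpace Ω) (P : @Measure Ω m0) (p : ℝ) (X : Ω → E) : Ω → ℝ :=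
  fun ω => (P[fun ω' => ‖X ω'‖ ^ p|m]) ω ^ (1 / p)

/-- The Lévy symbol of the rotationally symmetric `α`-stable process. -/
def stablePhi (d : ℕ) (α : ℝ) (ξ : Rd d) : ℂ :=
  ∫ x in {x : Rd d | x ≠ 0},
    (((1 : ℂ) - Complex.exp (Complex.I * ((inner ℝ ξ x : ℝ) : ℂ))
        + Complex.I * ((inner ℝ ξ x : ℝ) : ℂ) * (if ‖x‖ ≤ 1 then 1 else 0))
      * ((‖x‖ ^ (-(d : ℝ) - α) : ℝ) : ℂ))

/-- `L` is a `d`-dimensional `α`-stable process with respect to the filtration `F`. -/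
def IsStableProcess {Ω : Type*} [mΩ : MeasurableSpace Ω] (d : ℕ) (α : ℝ)
    (P : Measure Ω) (F : Filtration ℝ mΩ) (L : ℝ → Ω → Rd d) : Prop :=
  (∀ ω, L 0 ω = 0) ∧ Adapted F L ∧
  (∀ ω, ∀ t : ℝ, ContinuousWithinAt (fun s => L s ω) (Ici t) t) ∧
  (∀ ω, ∀ t : ℝ, ∃ l, Tendsto (fun s => L s ω) (nhdsWithin t (Iio t)) (nhds l)) ∧
  (∀ s t : ℝ, 0 ≤ s → s ≤ t →
    ProbabilityTheory.Indep
      (MeasurableSpace.comap (fun ω => L t ω - L s ω) inferInstance) (F s) P) ∧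
  (∀ s t : ℝ, 0 ≤ s → s ≤ t → ∀ ξ : Rd d,
    ∫ ω, Complex.exp (Complex.I * ((inner ℝ ξ (L t ω - L s ω) : ℝ) : ℂ)) ∂P
      = Complex.exp (-((t - s : ℝ) : ℂ) * stablePhi d α ξ))

/-- The kinetic noise `M_t = (∫_0^t L_r dr, L_t)`. -/
def Mproc {d : ℕ} {Ω : Type*} (L : ℝ → Ω → Rd d) (t : ℝ) (ω : Ω) : R2d d :=
  (∫ r in (0 : ℝ)..t, L r ω, L t ω)

/-- The grid point `k_n(t) = ⌊nt⌋/n`. -/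
def kn (n : ℕ) (t : ℝ) : ℝ := (⌊(n : ℝ) * t⌋ : ℝ) / (n : ℝ)

/-- `Z = (X,V)` solves the kinetic SDE on `[0,1]`. -/
def SolvesKineticSDE {d : ℕ} {Ω : Type*} [mΩ : MeasurableSpace Ω] (P : Measure Ω)
    (F : Filtration ℝ mΩ) (L : ℝ → Ω → Rd d) (b : R2d d → Rd d) (ξ₀ η₀ : Ω → Rd d)
    (X V : ℝ → Ω → Rd d) : Prop :=
  Adapted F X ∧ Adapted F V ∧
  (∀ᵐ ω ∂P, ∀ t ∈ Icc (0 : ℝ) 1,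
    (X t ω = ξ₀ ω + ∫ s in (0 : ℝ)..t, V s ω) ∧
    (V t ω = η₀ ω + (∫ s in (0 : ℝ)..t, b (X s ω, V s ω)) + L t ω))

/-- `Z^n = (X^n, V^n)` is the Euler scheme on `[0,1]`. -/
def SolvesEuler {d : ℕ} {Ω : Type*} [mΩ : MeasurableSpace Ω] (P : Measure Ω)
    (F : Filtration ℝ mΩ) (L : ℝ → Ω → Rd d) (b : R2d d → Rd d) (ξ₀ η₀ : Ω → Rd d)
    (n : ℕ) (Xn Vn : ℝ → Ω → Rd d) : Prop :=
  Adapted F Xn ∧ Adapted F Vn ∧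
  (∀ᵐ ω ∂P, ∀ t ∈ Icc (0 : ℝ) 1,
    (Xn t ω = ξ₀ ω + ∫ s in (0 : ℝ)..t, Vn s ω) ∧
    (Vn t ω = η₀ ω +
      (∫ s in (0 : ℝ)..t, b (Gam (s - kn n s) (Xn (kn n s) ω, Vn (kn n s) ω))) + L t ω))

/-- Assumption A of the paper. -/
def AssumptionA (d : ℕ) (α β : ℝ) (b : R2d d → Rd d) : Prop :=
  1 - α / 2 < β ∧ β < (α - 1) * (1 + α) ∧
  aHolderNorm α β b < ⊤ ∧ xHolderNorm ((α + β) / (1 + α)) b < ⊤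

/-- The random variable `‖g‖_{C_p^0|G,[S,T]}`. -/
def C0NormRV {Ω : Type*} {m0 : MeasurableSpace Ω} {E : Type*} [NormedAddCommGroup E]
    (G : MeasurableSpace Ω) (P : @Measure Ω m0) (p : ℝ) (g : ℝ → Ω → E) (S T : ℝ) (ω : Ω) : ℝ :=
  ⨆ t : Icc S T, condLp G P p (g t) ω

/-- The random variable `[g]_{C_p^γ|G,[S,T]}`. -/
def CHolderRV {Ω : Type*} {m0 : MeasurableSpace Ω} {E : Type*} [NormedAddCommGroup E]
    (G : MeasurableSpace Ω) (P : @Measure Ω m0) (p γ : ℝ) (g : ℝ → Ω → E) (S T : ℝ) (ω : Ω) : ℝ :=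
  ⨆ q : {q : ℝ × ℝ // S ≤ q.1 ∧ q.1 < q.2 ∧ q.2 ≤ T},
    condLp G P p (fun ω' => g q.1.2 ω' - g q.1.1 ω') ω / (q.1.2 - q.1.1) ^ γ

/-- The random variable `[g]_{𝒮C_p^γ|G,[S,T]}`. -/
def SCHolderRV {Ω : Type*} {m0 : MeasurableSpace Ω} {E : Type*} [NormedAddCommGroup E]
    [NormedSpace ℝ E] [CompleteSpace E]
    (F : Filtration ℝ m0) (G : MeasurableSpace Ω) (P : @Measure Ω m0)
    (p γ : ℝ) (g : ℝ → Ω → E) (S T : ℝ) (ω : Ω) : ℝ :=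
  ⨆ q : {q : ℝ × ℝ // S ≤ q.1 ∧ q.1 < q.2 ∧ q.2 ≤ T},
    condLp G P p (P[fun ω' => ‖g q.1.2 ω' - (P[g q.1.2|F q.1.1]) ω'‖|F q.1.1]) ω
      / (q.1.2 - q.1.1) ^ γ

/-- The kinetic semigroup `P_t f (z) = E f(M_t + Γ_t z)`. -/
def kineticSemigroup {d : ℕ} {Ω : Type*} {m0 : MeasurableSpace Ω} (P : @Measure Ω m0)
    (L : ℝ → Ω → Rd d) (f : R2d d → ℝ) (t : ℝ) (z : R2d d) : ℝ :=
  ∫ ω, f (Mproc L t ω + Gam t z) ∂P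

/-!
Write `s = (1 + α) β`. As `Γ_t` is linear, `δ_h^{(m)} (f ∘ Γ_t) = (δ_{Γ_t h}^{(m)} f) ∘ Γ_t`, and
`Γ_t h = (h_x + t h_v, h_v)` can be much longer than `h` in the `x`-direction. Such an `x`-step is
paid for with the order-`s` bound, since `(t |h_v|)^{s/(1+α)} = t^β |h_v|^β`, every other step
with the order-`β` bound. Both are combined in the gauge
`|k_v|^β A + min (|k_x|^{β/(1+α)} A) (|k_x|^β B)`, which differences of order `⌊s⌋ + 1` obey
(compare `|k|_a` with its larger component). Marchaud's inequality
`2^m |δ_k^{(m)} f| ≤ |δ_{2k}^{(m)} f| + m 2^m sup |δ_k^{(m+1)} f|` then lowers the order one step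
at a time down to `⌊β⌋ + 1`, since the gauge grows at most by `2^β < 2^m` under `k ↦ 2k`.
With `A = B` the same argument gives `C^s_a ⊂ C^β_a`, so `‖f‖_{C^β_a}` is finite and its `toReal`
is not a junk `0`.
-/

open fwdDiff

section IteratedDifferences

variable {M E : Type*} [AddCommMonoid M] [SeminormedAddCommGroup E]

lemma fwdDiff_iter_zero_left {m : ℕ} (hm : m ≠ 0) (f : M → E) : Δ_[0] ^[m] f = 0 := by
  obtain ⟨m, rfl⟩ := Nat.exists_eq_succ_of_ne_zero hm
  rw [Function.iterate_succ_apply']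
  funext y
  simp [fwdDiff]

lemma fwdDiff_iter_comp {N : Type*} [AddCommMonoid N] (L : M →+ N) (f : N → E) (h : M)
    (m : ℕ) : Δ_[h] ^[m] (f ∘ L) = (Δ_[L h] ^[m] f) ∘ L := by
  have hL : Function.Semiconj (fun g : N → E => g ∘ L) Δ_[L h] Δ_[h] := fun g => by
    funext y
    simp [fwdDiff]
  exact (hL.iterate_right m f).symm

lemma norm_fwdDiff_iter_le {f : M → E} {c : ℝ} (hf : ∀ y, ‖f y‖ ≤ c) (h : M) (m : ℕ)
    (y : M) : ‖Δ_[h] ^[m] f y‖ ≤ 2 ^ m * c := by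
  induction m generalizing y with
  | zero => simpa using hf y
  | succ m ih =>
    rw [Function.iterate_succ_apply', fwdDiff, pow_succ]
    linarith [norm_sub_le (Δ_[h] ^[m] f (y + h)) (Δ_[h] ^[m] f y), ih (y + h), ih y]

open fwdDiff_aux in
theorem fwdDiff_iter_add_self (f : M → E) (h : M) (m : ℕ) (y : M) :
    Δ_[h + h] ^[m] f y = ∑ j ∈ Finset.range (m + 1), m.choose j • Δ_[h] ^[m] f (y + j • h) := by
  have hfac : fwdDiffₗ M E (h + h) = (shiftₗ M E h + 1) * fwdDiffₗ M E h := by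
    ext g z
    simp [shiftₗ_apply, fwdDiff, add_assoc]
  have hcomm : Commute (shiftₗ M E h + 1) (fwdDiffₗ M E h) :=
    ((Commute.refl _).add_left (Commute.one_left _)).add_left (Commute.one_left _)
  rw [← coe_fwdDiffₗ_pow, hfac, hcomm.mul_pow, (Commute.one_right _).add_pow,
    Module.End.mul_apply, LinearMap.sum_apply, Finset.sum_apply]
  refine Finset.sum_congr rfl fun j _ => ?_
  rw [one_pow, mul_one, Module.End.mul_apply, Module.End.natCast_apply, shiftₗ_pow_apply,
    Pi.smul_apply, coe_fwdDiffₗ_pow]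

lemma norm_shift_sub_le_of_norm_fwdDiff_le {g : M → E} {h : M} {c : ℝ}
    (hc : ∀ y, ‖Δ_[h] g y‖ ≤ c) (j : ℕ) (y : M) : ‖g (y + j • h) - g y‖ ≤ j * c := by
  have htel := Finset.sum_range_sub (fun i => g (y + i • h)) j
  simp only [zero_smul, add_zero] at htel
  rw [← htel]
  calc ‖∑ i ∈ Finset.range j, (g (y + (i + 1) • h) - g (y + i • h))‖
      ≤ ∑ _i ∈ Finset.range j, c := by
        refine norm_sum_le_of_le _ fun i _ => ?_
        simpa [fwdDiff, succ_nsmul, add_assoc] using hc (y + i • h)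
    _ = j * c := by simp

variable [NormedSpace ℝ E]

theorem two_pow_mul_norm_fwdDiff_iter_le {f : M → E} {h : M} {m : ℕ} {c : ℝ}
    (hc : ∀ y, ‖Δ_[h] ^[m + 1] f y‖ ≤ c) (y : M) :
    2 ^ m * ‖Δ_[h] ^[m] f y‖ ≤ ‖Δ_[h + h] ^[m] f y‖ + m * 2 ^ m * c := by
  have hc' : ∀ y, ‖Δ_[h] (Δ_[h] ^[m] f) y‖ ≤ c := fun y => by
    simpa only [Function.iterate_succ_apply'] using hc y
  have hsum : ∑ j ∈ Finset.range (m + 1), (m.choose j : ℝ) = 2 ^ m := by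
    exact_mod_cast Nat.sum_range_choose m
  have hdiff : (2 ^ m : ℝ) • Δ_[h] ^[m] f y - Δ_[h + h] ^[m] f y
      = ∑ j ∈ Finset.range (m + 1),
          (m.choose j : ℝ) • (Δ_[h] ^[m] f y - Δ_[h] ^[m] f (y + j • h)) := by
    simp only [fwdDiff_iter_add_self, ← Nat.cast_smul_eq_nsmul ℝ, ← hsum, Finset.sum_smul,
      ← Finset.sum_sub_distrib, smul_sub]
  have hbound : ‖(2 ^ m : ℝ) • Δ_[h] ^[m] f y - Δ_[h + h] ^[m] f y‖ ≤ m * 2 ^ m * c := by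
    rw [hdiff]
    calc _ ≤ ∑ j ∈ Finset.range (m + 1), (m.choose j : ℝ) * (m * c) := by
          refine norm_sum_le_of_le _ fun j hj => ?_
          rw [norm_smul, Real.norm_natCast, norm_sub_rev]
          gcongr
          refine (norm_shift_sub_le_of_norm_fwdDiff_le hc' j y).trans ?_
          gcongr
          · exact (norm_nonneg _).trans (hc' y)
          · exact_mod_cast Nat.lt_succ_iff.mp (Finset.mem_range.mp hj)
      _ = m * 2 ^ m * c := by rw [← Finset.sum_mul, hsum]; ring
  have := norm_sub_norm_le ((2 ^ m : ℝ) • Δ_[h] ^[m] f y) (Δ_[h + h] ^[m] f y)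
  rw [norm_smul, Real.norm_of_nonneg (by positivity)] at this
  linarith

lemma two_rpow_lt_two_pow {β : ℝ} {m : ℕ} (hm : β < m) : (2 : ℝ) ^ β < 2 ^ m := by
  rw [← Real.rpow_natCast]
  exact Real.rpow_lt_rpow_of_exponent_lt one_lt_two hm

theorem norm_fwdDiff_iter_le_of_doubling {β F : ℝ} {m : ℕ} (hβ : 0 ≤ β) (hm : β < m)
    {f : M → E} {G : M → ℝ} (hf : ∀ y, ‖f y‖ ≤ F) (hG : ∀ k, G (k + k) ≤ 2 ^ β * G k)
    (hlarge : ∀ k ≠ 0, ∃ n : ℕ, F ≤ G (2 ^ n • k))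
    (hsucc : ∀ k y, ‖Δ_[k] ^[m + 1] f y‖ ≤ G k) (k y : M) :
    ‖Δ_[k] ^[m] f y‖ ≤ (2 ^ m + m * 2 ^ m / (2 ^ m - 2 ^ β)) * G k := by
  set C : ℝ := 2 ^ m + m * 2 ^ m / (2 ^ m - 2 ^ β)
  have hgap : 0 < (2 : ℝ) ^ m - 2 ^ β := sub_pos.mpr (two_rpow_lt_two_pow hm)
  have hG0 : ∀ k, 0 ≤ G k := fun k => (norm_nonneg _).trans (hsucc k 0)
  have hF0 : 0 ≤ F := (norm_nonneg _).trans (hf 0)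
  have hCm : 2 ^ m ≤ C := le_add_of_nonneg_right (by positivity)
  -- the choice of `C` is what makes the doubling step close up
  have hCstep : C * 2 ^ β + m * 2 ^ m ≤ 2 ^ m * C := by
    have : C * (2 ^ m - 2 ^ β) = 2 ^ m * (2 ^ m - 2 ^ β) + m * 2 ^ m := by
      rw [add_mul, div_mul_cancel₀ _ hgap.ne']
    nlinarith [mul_pos (pow_pos two_pos m : (0 : ℝ) < 2 ^ m) hgap]
  have hdyadic : ∀ n : ℕ, ∀ k, F ≤ G (2 ^ n • k) → ∀ y, ‖Δ_[k] ^[m] f y‖ ≤ C * G k := by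
    intro n
    induction n with
    | zero =>
      intro k hk y
      rw [pow_zero, one_smul] at hk
      calc ‖Δ_[k] ^[m] f y‖ ≤ 2 ^ m * F := norm_fwdDiff_iter_le hf k m y
        _ ≤ C * G k := mul_le_mul hCm hk hF0 ((pow_nonneg zero_le_two m).trans hCm)
    | succ n ih =>
      intro k hk y
      rw [pow_succ, mul_nsmul, two_nsmul, ← nsmul_add] at hk
      have hkk := ih (k + k) hk y
      have hmarchaud := two_pow_mul_norm_fwdDiff_iter_le (hsucc k) y
      have : (2 : ℝ) ^ m * ‖Δ_[k] ^[m] f y‖ ≤ 2 ^ m * (C * G k) := by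
        nlinarith [hG k, hG0 k, mul_le_mul_of_nonneg_left (hG k) (by positivity : (0 : ℝ) ≤ C)]
      exact le_of_mul_le_mul_left this (by positivity)
  rcases eq_or_ne k 0 with rfl | hk
  · have hm0 : m ≠ 0 := by rintro rfl; norm_num at hm; linarith
    rw [fwdDiff_iter_zero_left hm0, Pi.zero_apply, norm_zero]
    exact mul_nonneg (by positivity) (hG0 0)
  · obtain ⟨n, hn⟩ := hlarge k hk
    exact hdyadic n k hn y

theorem exists_norm_fwdDiff_iter_le_of_doubling {β : ℝ} {m : ℕ} (hβ : 0 ≤ β) (hm : β < m)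
    (j : ℕ) :
    ∃ C, 1 ≤ C ∧ ∀ (f : M → E) (F : ℝ) (G : M → ℝ), (∀ y, ‖f y‖ ≤ F) →
      (∀ k, G (k + k) ≤ 2 ^ β * G k) → (∀ k ≠ 0, ∃ n : ℕ, F ≤ G (2 ^ n • k)) →
      (∀ k y, ‖Δ_[k] ^[m + j] f y‖ ≤ G k) → ∀ k y, ‖Δ_[k] ^[m] f y‖ ≤ C * G k := by
  induction j with
  | zero => exact ⟨1, le_rfl, fun f F G _ _ _ h k y => by simpa using h k y⟩
  | succ j ih =>
    obtain ⟨C, hC1, hC⟩ := ih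
    have hmj : β < (m + j : ℕ) := hm.trans_le (by exact_mod_cast Nat.le_add_right m j)
    set c : ℝ := 2 ^ (m + j) + (m + j : ℕ) * 2 ^ (m + j) / (2 ^ (m + j) - 2 ^ β)
    have hc1 : 1 ≤ c := by
      have := sub_pos.mpr (two_rpow_lt_two_pow hmj)
      have : (1 : ℝ) ≤ 2 ^ (m + j) := one_le_pow₀ one_le_two
      have : (0 : ℝ) ≤ (m + j : ℕ) * 2 ^ (m + j) / (2 ^ (m + j) - 2 ^ β) := by positivity
      linarith
    refine ⟨C * c, one_le_mul_of_one_le_of_one_le hC1 hc1, ?_⟩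
    intro f F G hf hG hlarge hsucc k y
    have hG0 : ∀ k, 0 ≤ G k := fun k => (norm_nonneg _).trans (hsucc k 0)
    have hstep := norm_fwdDiff_iter_le_of_doubling hβ hmj hf hG hlarge hsucc
    have := hC f F (fun k => c * G k) hf
      (fun k => by nlinarith [hG k, hG0 k])
      (fun k hk => (hlarge k hk).imp fun n hn => hn.trans (le_mul_of_one_le_left (hG0 _) hc1))
      hstep k y
    rwa [← mul_assoc] at this

end IteratedDifferences

section Anisotropic

variable {d : ℕ} {α β : ℝ}

lemma Gam_add (t : ℝ) (z w : R2d d) : Gam t (z + w) = Gam t z + Gam t w := by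
  simp only [Gam, Prod.fst_add, Prod.snd_add, smul_add, Prod.mk_add_mk]
  abel_nf

lemma anorm_nonneg (α : ℝ) (k : R2d d) : 0 ≤ anorm α k := by
  unfold anorm
  positivity

lemma anorm_pos (α : ℝ) {k : R2d d} (hk : k ≠ 0) : 0 < anorm α k := by
  refine (anorm_nonneg α k).lt_of_ne' fun h0 => hk ?_
  have h1 := Real.rpow_nonneg (norm_nonneg k.1) (1 / (1 + α))
  have h2 := norm_nonneg k.2
  unfold anorm at h0
  have hx : ‖k.1‖ ^ (1 / (1 + α)) = 0 := by linarith
  have hv : ‖k.2‖ = 0 := by linarith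
  rw [Real.rpow_eq_zero_iff_of_nonneg (norm_nonneg _)] at hx
  exact Prod.ext (norm_eq_zero.mp hx.1) (norm_eq_zero.mp hv)

lemma rpow_le_two_rpow_mul_rpow {u v e : ℝ} (hu : 0 ≤ u) (huv : u ≤ 2 * v) (he : 0 ≤ e) :
    u ^ e ≤ 2 ^ e * v ^ e := by
  rw [← Real.mul_rpow zero_le_two (by linarith)]
  exact Real.rpow_le_rpow hu huv he

lemma rpow_rpow_le_of_le_two_mul (hα : 0 ≤ α) (hβ : 0 ≤ β) {u v : ℝ} (hu : 0 ≤ u)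
    (huv : u ≤ 2 * v) : (u ^ (1 / (1 + α))) ^ β ≤ 2 ^ β * (v ^ (1 / (1 + α))) ^ β := by
  have hθ : 0 ≤ 1 / (1 + α) := by positivity
  have h2θ : (2 : ℝ) ^ (1 / (1 + α)) ≤ 2 :=
    Real.rpow_le_self_of_one_le one_le_two (div_le_one_of_le₀ (by linarith) (by linarith))
  refine rpow_le_two_rpow_mul_rpow (by positivity) ?_ hβ
  calc u ^ (1 / (1 + α)) ≤ 2 ^ (1 / (1 + α)) * v ^ (1 / (1 + α)) :=
        rpow_le_two_rpow_mul_rpow hu huv hθ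
    _ ≤ 2 * v ^ (1 / (1 + α)) := by
        have : 0 ≤ v := by linarith
        gcongr

def mixedGauge (α β A B : ℝ) (k : R2d d) : ℝ :=
  ‖k.2‖ ^ β * A + min ((‖k.1‖ ^ (1 / (1 + α))) ^ β * A) (‖k.1‖ ^ β * B)

variable {A B : ℝ}

lemma mixedGauge_nonneg (hA : 0 ≤ A) (hB : 0 ≤ B) (k : R2d d) : 0 ≤ mixedGauge α β A B k := by
  unfold mixedGauge
  have := Real.rpow_nonneg (norm_nonneg k.1) (1 / (1 + α))
  positivity

lemma mixedGauge_add_self_le (hα : 0 ≤ α) (hβ : 0 ≤ β) (hA : 0 ≤ A) (k : R2d d) :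
    mixedGauge α β A B (k + k) ≤ 2 ^ β * mixedGauge α β A B k := by
  have hnorm : ∀ x : Rd d, ‖x + x‖ = 2 * ‖x‖ := fun x => by
    rw [← two_smul ℝ x, norm_smul, Real.norm_two]
  have hscale : ∀ x : Rd d, ‖x + x‖ ^ β = 2 ^ β * ‖x‖ ^ β := fun x => by
    rw [hnorm, Real.mul_rpow zero_le_two (norm_nonneg _)]
  unfold mixedGauge
  rw [Prod.snd_add, Prod.fst_add, hscale, hscale, mul_add,
    mul_min_of_nonneg _ _ (by positivity : (0 : ℝ) ≤ 2 ^ β)]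
  refine add_le_add (mul_assoc _ _ _).le (min_le_min ?_ (mul_assoc _ _ _).le)
  rw [← mul_assoc]
  exact mul_le_mul_of_nonneg_right
    (rpow_rpow_le_of_le_two_mul hα hβ (norm_nonneg _) (hnorm _).le) hA

lemma min_le_mixedGauge (hα : 0 ≤ α) (hβ : 0 ≤ β) (hA : 0 ≤ A) (hB : 0 ≤ B) {k : R2d d}
    (hk : 1 ≤ ‖k‖) : min A B ≤ mixedGauge α β A B k := by
  have hmin := Real.rpow_nonneg (norm_nonneg k.1) (1 / (1 + α))
  unfold mixedGauge
  rcases le_max_iff.mp (Prod.norm_def k ▸ hk) with h1 | h2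
  · have hx : 1 ≤ (‖k.1‖ ^ (1 / (1 + α))) ^ β :=
      Real.one_le_rpow (Real.one_le_rpow h1 (by positivity)) hβ
    have hx' : 1 ≤ ‖k.1‖ ^ β := Real.one_le_rpow h1 hβ
    have : min A B ≤ min ((‖k.1‖ ^ (1 / (1 + α))) ^ β * A) (‖k.1‖ ^ β * B) :=
      min_le_min (le_mul_of_one_le_left hA hx) (le_mul_of_one_le_left hB hx')
    have : 0 ≤ ‖k.2‖ ^ β * A := by positivity
    linarith
  · have : A ≤ ‖k.2‖ ^ β * A := le_mul_of_one_le_left hA (Real.one_le_rpow h2 hβ)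
    have : 0 ≤ min ((‖k.1‖ ^ (1 / (1 + α))) ^ β * A) (‖k.1‖ ^ β * B) := by positivity
    linarith [min_le_left A B]

lemma exists_le_mixedGauge_two_pow_nsmul (hα : 0 ≤ α) (hβ : 0 ≤ β) {F : ℝ} (hFA : F ≤ A)
    (hFB : F ≤ B) (hF : 0 ≤ F) {k : R2d d} (hk : k ≠ 0) :
    ∃ n : ℕ, F ≤ mixedGauge α β A B (2 ^ n • k) := by
  obtain ⟨n, hn⟩ := pow_unbounded_of_one_lt ‖k‖⁻¹ one_lt_two
  refine ⟨n, le_min hFA hFB |>.trans (min_le_mixedGauge hα hβ (hF.trans hFA) (hF.trans hFB) ?_)⟩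
  rw [RCLike.norm_nsmul ℝ, nsmul_eq_mul, Nat.cast_pow, Nat.cast_ofNat]
  rw [inv_lt_iff_one_lt_mul₀ (norm_pos_iff.mpr hk)] at hn
  exact hn.le

lemma le_two_rpow_mul_mixedGauge (hα : 0 ≤ α) (hβ : 0 ≤ β) {a b x : ℝ} (ha : 0 ≤ a)
    (hb : 0 ≤ b) {k : R2d d} (hxa : x ≤ anorm α k ^ β * a)
    (hxb : x ≤ anorm α k ^ ((1 + α) * β) * b) :
    x ≤ 2 ^ ((1 + α) * β) * mixedGauge α β a b k := by
  have hp := Real.rpow_nonneg (norm_nonneg k.1) (1 / (1 + α))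
  have hq := norm_nonneg k.2
  have hs : 0 ≤ (1 + α) * β := by positivity
  have h2s : (2 : ℝ) ^ β ≤ 2 ^ ((1 + α) * β) :=
    Real.rpow_le_rpow_of_exponent_le one_le_two (by nlinarith)
  have hv : ‖k.2‖ ^ β * a ≤ mixedGauge α β a b k :=
    le_add_of_nonneg_right (by positivity)
  have hx : min ((‖k.1‖ ^ (1 / (1 + α))) ^ β * a) (‖k.1‖ ^ β * b) ≤ mixedGauge α β a b k :=
    le_add_of_nonneg_left (by positivity)
  rcases le_total (‖k.1‖ ^ (1 / (1 + α))) ‖k.2‖ with hxv | hvx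
  · have hk : anorm α k ^ β ≤ 2 ^ β * ‖k.2‖ ^ β :=
      rpow_le_two_rpow_mul_rpow (anorm_nonneg α k) (by unfold anorm; linarith) hβ
    calc x ≤ anorm α k ^ β * a := hxa
      _ ≤ 2 ^ ((1 + α) * β) * (‖k.2‖ ^ β * a) := by
          rw [← mul_assoc]; gcongr; exact hk.trans (by gcongr)
      _ ≤ 2 ^ ((1 + α) * β) * mixedGauge α β a b k := by gcongr
  · have hk : anorm α k ≤ 2 * ‖k.1‖ ^ (1 / (1 + α)) := by unfold anorm; linarith
    have hpow : (‖k.1‖ ^ (1 / (1 + α))) ^ ((1 + α) * β) = ‖k.1‖ ^ β := by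
      rw [← Real.rpow_mul (norm_nonneg _)]
      congr 1
      field_simp
    have hka := rpow_le_two_rpow_mul_rpow (anorm_nonneg α k) hk hβ
    have hkb := rpow_le_two_rpow_mul_rpow (anorm_nonneg α k) hk hs
    rw [hpow] at hkb
    calc x ≤ 2 ^ ((1 + α) * β) * min ((‖k.1‖ ^ (1 / (1 + α))) ^ β * a) (‖k.1‖ ^ β * b) := by
          rw [mul_min_of_nonneg _ _ (by positivity)]
          refine le_min (hxa.trans ?_) (hxb.trans ?_)
          · rw [← mul_assoc]; gcongr; exact hka.trans (by gcongr)
          · rw [← mul_assoc]; gcongr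
      _ ≤ 2 ^ ((1 + α) * β) * mixedGauge α β a b k := by gcongr

lemma mixedGauge_le (hβ : 0 ≤ β) (hA : 0 ≤ A) (k : R2d d) :
    mixedGauge α β A B k ≤ 2 * anorm α k ^ β * A := by
  have hp := Real.rpow_nonneg (norm_nonneg k.1) (1 / (1 + α))
  have hq := norm_nonneg k.2
  have hv : ‖k.2‖ ^ β ≤ anorm α k ^ β :=
    Real.rpow_le_rpow hq (by unfold anorm; linarith) hβ
  have hx : (‖k.1‖ ^ (1 / (1 + α))) ^ β ≤ anorm α k ^ β :=
    Real.rpow_le_rpow hp (by unfold anorm; linarith) hβ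
  unfold mixedGauge
  nlinarith [min_le_left ((‖k.1‖ ^ (1 / (1 + α))) ^ β * A) (‖k.1‖ ^ β * B)]

lemma mixedGauge_Gam_le (hα : 0 ≤ α) (hβ : 0 ≤ β) (hA : 0 ≤ A) (hB : 0 ≤ B) {t : ℝ}
    (ht : 0 ≤ t) (h : R2d d) :
    mixedGauge α β A B (Gam t h) ≤ (1 + 2 ^ β) * anorm α h ^ β * (A + t ^ β * B) := by
  have hp := Real.rpow_nonneg (norm_nonneg h.1) (1 / (1 + α))
  have hq := norm_nonneg h.2
  have hh : 0 ≤ anorm α h ^ β := Real.rpow_nonneg (anorm_nonneg α h) β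
  have htB : 0 ≤ t ^ β * B := by positivity
  have hv : ‖h.2‖ ^ β ≤ anorm α h ^ β :=
    Real.rpow_le_rpow hq (by unfold anorm; linarith) hβ
  have hw : ‖h.1 + t • h.2‖ ≤ ‖h.1‖ + t * ‖h.2‖ := by
    simpa [norm_smul, abs_of_nonneg ht] using norm_add_le h.1 (t • h.2)
  have hmin : min ((‖h.1 + t • h.2‖ ^ (1 / (1 + α))) ^ β * A) (‖h.1 + t • h.2‖ ^ β * B)
      ≤ 2 ^ β * anorm α h ^ β * (A + t ^ β * B) := by
    rcases le_total (t * ‖h.2‖) ‖h.1‖ with hshear | hshear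
    · have hx : (‖h.1‖ ^ (1 / (1 + α))) ^ β ≤ anorm α h ^ β :=
        Real.rpow_le_rpow hp (by unfold anorm; linarith) hβ
      have := rpow_rpow_le_of_le_two_mul hα hβ (norm_nonneg (h.1 + t • h.2)) (v := ‖h.1‖)
        (by linarith)
      calc _ ≤ (‖h.1 + t • h.2‖ ^ (1 / (1 + α))) ^ β * A := min_le_left _ _
        _ ≤ 2 ^ β * (‖h.1‖ ^ (1 / (1 + α))) ^ β * A := mul_le_mul_of_nonneg_right this hA
        _ ≤ 2 ^ β * anorm α h ^ β * A := by gcongr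
        _ ≤ _ := by gcongr; linarith
    · have := rpow_le_two_rpow_mul_rpow (norm_nonneg (h.1 + t • h.2)) (v := t * ‖h.2‖)
        (by linarith) hβ
      rw [Real.mul_rpow ht hq] at this
      calc _ ≤ ‖h.1 + t • h.2‖ ^ β * B := min_le_right _ _
        _ ≤ 2 ^ β * (t ^ β * ‖h.2‖ ^ β) * B := mul_le_mul_of_nonneg_right this hB
        _ ≤ 2 ^ β * (t ^ β * anorm α h ^ β) * B := by gcongr
        _ = 2 ^ β * anorm α h ^ β * (t ^ β * B) := by ring
        _ ≤ _ := by gcongr; linarith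
  unfold mixedGauge Gam
  dsimp only
  nlinarith [mul_le_mul_of_nonneg_right hv hA]

end Anisotropic

lemma deltaIter_eq_fwdDiff_iter {d : ℕ} {E : Type*} [AddCommGroup E] (h : R2d d) (m : ℕ)
    (f : R2d d → E) : deltaIter h m f = Δ_[h] ^[m] f := by
  induction m with
  | zero => rfl
  | succ m ih =>
    rw [Function.iterate_succ_apply', ← ih]
    rfl

section HolderNorm

variable {d : ℕ} {α s : ℝ} {E : Type*} [NormedAddCommGroup E]

lemma norm_le_toReal_aHolderNorm {f : R2d d → E} (hf : aHolderNorm α s f ≠ ⊤) (y : R2d d) :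
    ‖f y‖ ≤ (aHolderNorm α s f).toReal := by
  rw [← ENNReal.ofReal_le_iff_le_toReal hf, ofReal_norm, enorm_eq_nnnorm]
  exact (le_iSup (fun z => (‖f z‖₊ : ℝ≥0∞)) y).trans le_self_add

lemma norm_fwdDiff_iter_le_aHolderNorm {f : R2d d → E} (hf : aHolderNorm α s f ≠ ⊤)
    (k y : R2d d) :
    ‖Δ_[k] ^[⌊s⌋₊ + 1] f y‖ ≤ anorm α k ^ s * (aHolderNorm α s f).toReal := by
  rcases eq_or_ne k 0 with rfl | hk
  · rw [fwdDiff_iter_zero_left (Nat.succ_ne_zero _), Pi.zero_apply, norm_zero]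
    exact mul_nonneg (Real.rpow_nonneg (anorm_nonneg α 0) s) ENNReal.toReal_nonneg
  have hweighted : anorm α k ^ (-s) * ‖deltaIter k (⌊s⌋₊ + 1) f y‖
      ≤ (aHolderNorm α s f).toReal := by
    rw [← ENNReal.ofReal_le_iff_le_toReal hf]
    refine le_add_left (le_iSup₂_of_le k hk ?_)
    exact le_iSup_of_le y le_rfl
  rwa [deltaIter_eq_fwdDiff_iter, Real.rpow_neg (anorm_nonneg α k),
    inv_mul_le_iff₀ (Real.rpow_pos_of_pos (anorm_pos α hk) s)] at hweighted

lemma aHolderNorm_le_ofReal {f : R2d d → E} {F R : ℝ} (hF : ∀ y, ‖f y‖ ≤ F) (hR : 0 ≤ R)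
    (hf : ∀ k ≠ 0, ∀ y, ‖Δ_[k] ^[⌊s⌋₊ + 1] f y‖ ≤ anorm α k ^ s * R) :
    aHolderNorm α s f ≤ ENNReal.ofReal (F + R) := by
  rw [ENNReal.ofReal_add ((norm_nonneg _).trans (hF 0)) hR]
  refine add_le_add (iSup_le fun y => ?_)
    (iSup₂_le fun k hk => iSup_le fun y => ENNReal.ofReal_le_ofReal ?_)
  · rw [← enorm_eq_nnnorm, ← ofReal_norm]
    exact ENNReal.ofReal_le_ofReal (hF y)
  · rw [deltaIter_eq_fwdDiff_iter, Real.rpow_neg (anorm_nonneg α k),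
      inv_mul_le_iff₀ (Real.rpow_pos_of_pos (anorm_pos α hk) s)]
    exact hf k hk y

end HolderNorm

section Estimates

variable {d : ℕ} {α β : ℝ} {E : Type*} [NormedAddCommGroup E] [NormedSpace ℝ E]

theorem exists_norm_fwdDiff_iter_le_mixedGauge (hα : 0 ≤ α) (hβ : 0 < β) :
    ∃ C > 0, ∀ (f : R2d d → E) (F a b : ℝ), (∀ y, ‖f y‖ ≤ F) → F ≤ a → F ≤ b →
      (∀ k y, ‖Δ_[k] ^[⌊(1 + α) * β⌋₊ + 1] f y‖ ≤ anorm α k ^ β * a) →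
      (∀ k y, ‖Δ_[k] ^[⌊(1 + α) * β⌋₊ + 1] f y‖ ≤ anorm α k ^ ((1 + α) * β) * b) →
      ∀ k y, ‖Δ_[k] ^[⌊β⌋₊ + 1] f y‖ ≤ C * mixedGauge α β a b k := by
  have hfloor : ⌊β⌋₊ + 1 + (⌊(1 + α) * β⌋₊ - ⌊β⌋₊) = ⌊(1 + α) * β⌋₊ + 1 := by
    have := Nat.floor_le_floor (show β ≤ (1 + α) * β by nlinarith)
    omega
  obtain ⟨C, hC1, hC⟩ := exists_norm_fwdDiff_iter_le_of_doubling (M := R2d d) (E := E) hβ.le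
    (by exact_mod_cast Nat.lt_floor_add_one β) (⌊(1 + α) * β⌋₊ - ⌊β⌋₊)
  refine ⟨C * 2 ^ ((1 + α) * β), by positivity, fun f F a b hf hFa hFb hxa hxb k y => ?_⟩
  have hF : 0 ≤ F := (norm_nonneg _).trans (hf 0)
  have ha : 0 ≤ a := hF.trans hFa
  have hb : 0 ≤ b := hF.trans hFb
  have h2s : (1 : ℝ) ≤ 2 ^ ((1 + α) * β) := Real.one_le_rpow one_le_two (by positivity)
  rw [mul_assoc]
  refine hC f F (fun k => 2 ^ ((1 + α) * β) * mixedGauge α β a b k) hf (fun k => ?_)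
    (fun k hk => ?_) (fun k y => ?_) k y
  · rw [mul_left_comm]
    exact mul_le_mul_of_nonneg_left (mixedGauge_add_self_le hα hβ.le ha k) (by positivity)
  · obtain ⟨n, hn⟩ := exists_le_mixedGauge_two_pow_nsmul hα hβ.le hFa hFb hF hk
    exact ⟨n, hn.trans (le_mul_of_one_le_left (mixedGauge_nonneg ha hb _) h2s)⟩
  · rw [hfloor]
    exact le_two_rpow_mul_mixedGauge hα hβ.le ha hb (hxa k y) (hxb k y)

theorem exists_aHolderNorm_le_mul_aHolderNorm (hα : 0 ≤ α) (hβ : 0 < β) :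
    ∃ C, ∀ f : R2d d → E,
      aHolderNorm α β f ≤ ENNReal.ofReal C * aHolderNorm α ((1 + α) * β) f := by
  obtain ⟨C, hC, hCf⟩ := exists_norm_fwdDiff_iter_le_mixedGauge (d := d) (E := E) hα hβ
  set N := ⌊(1 + α) * β⌋₊
  refine ⟨1 + 2 ^ (N + 2) * C, fun f => ?_⟩
  rcases eq_or_ne (aHolderNorm α ((1 + α) * β) f) ⊤ with htop | hfin
  · rw [htop, ENNReal.mul_top (by simp only [ne_eq, ENNReal.ofReal_eq_zero, not_le]; positivity)]
    exact le_top
  set B := (aHolderNorm α ((1 + α) * β) f).toReal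
  have hB : 0 ≤ B := ENNReal.toReal_nonneg
  have hfB := norm_le_toReal_aHolderNorm hfin
  have hs := norm_fwdDiff_iter_le_aHolderNorm hfin
  have h2N : (1 : ℝ) ≤ 2 ^ (N + 1) := one_le_pow₀ one_le_two
  -- the bound at order `(1 + α) β` for small steps, the sup bound for large ones
  have hβs : ∀ k y, ‖Δ_[k] ^[N + 1] f y‖ ≤ anorm α k ^ β * (2 ^ (N + 1) * B) := by
    intro k y
    rcases le_total (anorm α k) 1 with hk | hk
    · calc ‖Δ_[k] ^[N + 1] f y‖ ≤ anorm α k ^ ((1 + α) * β) * B := hs k y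
        _ ≤ anorm α k ^ β * B := by
            refine mul_le_mul_of_nonneg_right ?_ hB
            exact Real.rpow_le_rpow_of_exponent_ge' (anorm_nonneg α k) hk hβ.le (by nlinarith)
        _ ≤ anorm α k ^ β * (2 ^ (N + 1) * B) :=
            mul_le_mul_of_nonneg_left (le_mul_of_one_le_left hB h2N)
              (Real.rpow_nonneg (anorm_nonneg α k) β)
    · calc ‖Δ_[k] ^[N + 1] f y‖ ≤ 2 ^ (N + 1) * B := norm_fwdDiff_iter_le hfB k (N + 1) y
        _ ≤ anorm α k ^ β * (2 ^ (N + 1) * B) :=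
            le_mul_of_one_le_left (by positivity) (Real.one_le_rpow hk hβ.le)
  have hΔ := hCf f B (2 ^ (N + 1) * B) B hfB (le_mul_of_one_le_left hB h2N) le_rfl hβs hs
  calc aHolderNorm α β f ≤ ENNReal.ofReal (B + 2 ^ (N + 2) * C * B) := by
        refine aHolderNorm_le_ofReal hfB (by positivity) fun k _ y => (hΔ k y).trans ?_
        calc C * mixedGauge α β (2 ^ (N + 1) * B) B k
            ≤ C * (2 * anorm α k ^ β * (2 ^ (N + 1) * B)) := by
              gcongr
              exact mixedGauge_le hβ.le (by positivity) k
          _ = anorm α k ^ β * (2 ^ (N + 2) * C * B) := by ring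
    _ = ENNReal.ofReal ((1 + 2 ^ (N + 2) * C) * B) := by ring_nf
    _ = ENNReal.ofReal (1 + 2 ^ (N + 2) * C) * aHolderNorm α ((1 + α) * β) f := by
        rw [ENNReal.ofReal_mul (by positivity), ENNReal.ofReal_toReal hfin]

theorem exists_aHolderNorm_comp_Gam_le (hα : 0 ≤ α) (hβ : 0 < β) :
    ∃ C > 0, ∀ t : ℝ, 0 ≤ t → ∀ f : R2d d → E, aHolderNorm α β f ≠ ⊤ →
      aHolderNorm α ((1 + α) * β) f ≠ ⊤ →
        aHolderNorm α β (fun z => f (Gam t z))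
          ≤ ENNReal.ofReal (C * ((aHolderNorm α β f).toReal
            + t ^ β * (aHolderNorm α ((1 + α) * β) f).toReal)) := by
  obtain ⟨C, hC, hCf⟩ := exists_norm_fwdDiff_iter_le_mixedGauge (d := d) (E := E) hα hβ
  set M := ⌊β⌋₊
  set N := ⌊(1 + α) * β⌋₊
  have hMN : M ≤ N := Nat.floor_le_floor (by nlinarith)
  refine ⟨1 + C * (1 + 2 ^ β) * 2 ^ (N - M), by positivity, fun t ht f hfA hfB => ?_⟩
  set A := (aHolderNorm α β f).toReal
  set B := (aHolderNorm α ((1 + α) * β) f).toReal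
  have hA : 0 ≤ A := ENNReal.toReal_nonneg
  have hB : 0 ≤ B := ENNReal.toReal_nonneg
  have htB : 0 ≤ t ^ β * B := by positivity
  have h2NM : (1 : ℝ) ≤ 2 ^ (N - M) := one_le_pow₀ one_le_two
  have hβs : ∀ k y, ‖Δ_[k] ^[N + 1] f y‖ ≤ anorm α k ^ β * (2 ^ (N - M) * A) := by
    intro k y
    rw [show N + 1 = (N - M) + (M + 1) by omega, Function.iterate_add_apply, mul_left_comm]
    exact norm_fwdDiff_iter_le (norm_fwdDiff_iter_le_aHolderNorm hfA k) k (N - M) y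
  have hΔ := hCf f (min A B) (2 ^ (N - M) * A) B
    (fun y => le_min (norm_le_toReal_aHolderNorm hfA y) (norm_le_toReal_aHolderNorm hfB y))
    ((min_le_left _ _).trans (le_mul_of_one_le_left hA h2NM)) (min_le_right _ _) hβs
    (norm_fwdDiff_iter_le_aHolderNorm hfB)
  refine (aHolderNorm_le_ofReal (fun y => norm_le_toReal_aHolderNorm hfA (Gam t y))
    (R := C * (1 + 2 ^ β) * 2 ^ (N - M) * (A + t ^ β * B)) (by positivity)
    fun h _ y => ?_).trans (ENNReal.ofReal_le_ofReal (by nlinarith))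
  have hcomp :=
    congr_fun (fwdDiff_iter_comp (AddMonoidHom.mk' (Gam t) (Gam_add t)) f h (M + 1)) y
  calc ‖Δ_[h] ^[M + 1] (fun z => f (Gam t z)) y‖ = ‖Δ_[Gam t h] ^[M + 1] f (Gam t y)‖ :=
        congrArg norm hcomp
    _ ≤ C * mixedGauge α β (2 ^ (N - M) * A) B (Gam t h) := hΔ _ _
    _ ≤ C * ((1 + 2 ^ β) * anorm α h ^ β * (2 ^ (N - M) * A + t ^ β * B)) := by
        gcongr
        exact mixedGauge_Gam_le hα hβ.le (by positivity) hB ht h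
    _ ≤ C * ((1 + 2 ^ β) * anorm α h ^ β * (2 ^ (N - M) * (A + t ^ β * B))) := by
        have := Real.rpow_nonneg (anorm_nonneg α h) β
        gcongr
        nlinarith
    _ = anorm α h ^ β * (C * (1 + 2 ^ β) * 2 ^ (N - M) * (A + t ^ β * B)) := by ring

end Estimates

theorem transport_operator_holder_bound_general
    {d : ℕ} (α β T : ℝ) (hα : α ∈ Ioo (1 : ℝ) 2) (hβ : 0 < β) :
    ∃ C > (0 : ℝ), ∀ t : ℝ, t ∈ Icc (0 : ℝ) T →
      ∀ f : R2d d → ℝ, aHolderNorm α ((1 + α) * β) f < ⊤ →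
        aHolderNorm α β (fun z => f (Gam t z))
          ≤ ENNReal.ofReal
              (C * ((aHolderNorm α β f).toReal
                + t ^ β * (aHolderNorm α ((1 + α) * β) f).toReal)) := by
  have hα0 : 0 ≤ α := zero_le_one.trans hα.1.le
  obtain ⟨C₀, hembed⟩ := exists_aHolderNorm_le_mul_aHolderNorm (d := d) (E := ℝ) hα0 hβ
  obtain ⟨C, hC, htransport⟩ := exists_aHolderNorm_comp_Gam_le (d := d) (E := ℝ) hα0 hβ
  refine ⟨C, hC, fun t ht f hf => htransport t ht.1 f ?_ hf.ne⟩
  exact ((hembed f).trans_lt (ENNReal.mul_lt_top ENNReal.ofReal_lt_top hf)).ne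

/-- Anisotropic Hölder bound for the free-transport operator. -/
theorem transport_operator_holder_bound
    {d : ℕ} (hd : 1 ≤ d) (α β T : ℝ) (hα : α ∈ Ioo (1 : ℝ) 2) (hβ : 0 < β) (hT : 0 < T) :
    ∃ C > (0 : ℝ), ∀ t : ℝ, t ∈ Icc (0 : ℝ) T →
      ∀ f : R2d d → ℝ, aHolderNorm α ((1 + α) * β) f < ⊤ →
        aHolderNorm α β (fun z => f (Gam t z))
          ≤ ENNReal.ofReal
              (C * ((aHolderNorm α β f).toReal
                + t ^ β * (aHolderNorm α ((1 + α) * β) f).toReal)) :=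
  transport_operator_holder_bound_general α β T hα hβ
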